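/- Let X be a real Banach space with dim X ≥ 2. Then Ω′(X) = (9/10)·γ_X(1/3), where γ_X(t) = sup{ (‖x+ty‖² + ‖x−ty‖²)/2 : x, y ∈ S_X } for t ∈ [0,1]. -/
import Mathlib


/-- The generalized orthogonal geometric constant
`Ω′(X) = sup{ (‖x+2y‖² + ‖2x+y‖²)/(5‖x+y‖²) : x, y ∈ X, (x,y) ≠ (0,0), x ⊥_I y }`. -/
noncomputable def OmegaPrime (X : Type*) [NormedAddCommGroup X] [NormedSpace ℝ X] : ℝ :=
  sSup { r : ℝ | ∃ x y : X, (x, y) ≠ (0, 0) ∧ ‖x + y‖ = ‖x - y‖ ∧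
    r = (‖x + (2 : ℝ) • y‖ ^ 2 + ‖(2 : ℝ) • x + y‖ ^ 2) / (5 * ‖x + y‖ ^ 2) }

/-- The function `γ_X(t) = sup{ (‖x+ty‖² + ‖x−ty‖²)/2 : x, y ∈ S_X }`. -/
noncomputable def gammaConst (X : Type*) [NormedAddCommGroup X] [NormedSpace ℝ X]
    (t : ℝ) : ℝ :=
  sSup { r : ℝ | ∃ x y : X, ‖x‖ = 1 ∧ ‖y‖ = 1 ∧
    r = (‖x + t • y‖ ^ 2 + ‖x - t • y‖ ^ 2) / 2 }

/-- For a real Banach space `X` with `dim X ≥ 2`, `Ω′(X) = (9/10)·γ_X(1/3)`. -/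
theorem omegaPrime_eq_gamma_third
    {X : Type*} [NormedAddCommGroup X] [NormedSpace ℝ X] [CompleteSpace X]
    (hdim : 2 ≤ Module.rank ℝ X) :
    OmegaPrime X = (9 / 10) * gammaConst X (1 / 3) := by
  classical
  set S : Set ℝ := { r : ℝ | ∃ x y : X, (x, y) ≠ (0, 0) ∧ ‖x + y‖ = ‖x - y‖ ∧
    r = (‖x + (2 : ℝ) • y‖ ^ 2 + ‖(2 : ℝ) • x + y‖ ^ 2) / (5 * ‖x + y‖ ^ 2) } with hSdef
  set A : Set ℝ := { r : ℝ | ∃ x y : X, ‖x‖ = 1 ∧ ‖y‖ = 1 ∧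
    r = (‖x + (1/3 : ℝ) • y‖ ^ 2 + ‖x - (1/3 : ℝ) • y‖ ^ 2) / 2 } with hAdef
  -- a unit vector exists
  obtain ⟨z, hz⟩ : ∃ z : X, z ≠ 0 := by
    rcases subsingleton_or_nontrivial X with h | h
    · exfalso
      have h0 : Module.rank ℝ X = 0 := by
        simp [rank_subsingleton']
      rw [h0] at hdim
      exact absurd hdim (by simp)
    · exact exists_ne 0
  have hz' : ‖z‖ ≠ 0 := norm_ne_zero_iff.mpr hz
  have he : ‖(‖z‖⁻¹ • z : X)‖ = 1 := by
    rw [norm_smul, norm_inv, norm_norm, inv_mul_cancel₀ hz']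
  have hAne : A.Nonempty := ⟨_, ‖z‖⁻¹ • z, ‖z‖⁻¹ • z, he, he, rfl⟩
  have hbdd : BddAbove A := by
    refine ⟨2, ?_⟩
    rintro r ⟨x, y, hx, hy, rfl⟩
    have h1 : ‖x + (1/3:ℝ) • y‖ ≤ 4/3 := by
      calc ‖x + (1/3:ℝ) • y‖ ≤ ‖x‖ + ‖(1/3:ℝ) • y‖ := norm_add_le _ _
        _ = 4/3 := by rw [norm_smul, hx, hy]; norm_num
    have h2 : ‖x - (1/3:ℝ) • y‖ ≤ 4/3 := by
      calc ‖x - (1/3:ℝ) • y‖ ≤ ‖x‖ + ‖(1/3:ℝ) • y‖ := norm_sub_le _ _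
        _ = 4/3 := by rw [norm_smul, hx, hy]; norm_num
    have h1' := norm_nonneg (x + (1/3:ℝ) • y)
    have h2' := norm_nonneg (x - (1/3:ℝ) • y)
    nlinarith
  -- forward map : each gamma value scaled by 9/10 is in S
  have hmap : ∀ g ∈ A, (9/10 : ℝ) * g ∈ S := by
    rintro g ⟨a, b, ha, hb, rfl⟩
    have hxy : (1/2:ℝ) • (a + b) + (1/2:ℝ) • (a - b) = a := by module
    have hxy' : (1/2:ℝ) • (a + b) - (1/2:ℝ) • (a - b) = b := by module
    refine ⟨(1/2:ℝ) • (a + b), (1/2:ℝ) • (a - b), ?_, ?_, ?_⟩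
    · intro h
      rw [Prod.mk.injEq] at h
      have ha0 : a = 0 := by rw [← hxy, h.1, h.2, add_zero]
      rw [ha0, norm_zero] at ha
      norm_num at ha
    · rw [hxy, hxy', ha, hb]
    · have e1 : (1/2:ℝ) • (a + b) + (2:ℝ) • ((1/2:ℝ) • (a - b))
          = (3/2:ℝ) • (a - (1/3:ℝ) • b) := by module
      have e2 : (2:ℝ) • ((1/2:ℝ) • (a + b)) + (1/2:ℝ) • (a - b)
          = (3/2:ℝ) • (a + (1/3:ℝ) • b) := by module
      rw [e1, e2, hxy, ha, norm_smul, norm_smul]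
      have h32 : ‖(3/2:ℝ)‖ = 3/2 := by
        rw [Real.norm_eq_abs, abs_of_nonneg]; norm_num
      rw [h32]
      ring
  -- reverse : each element of S equals 9/10 times a gamma value
  have hrev : ∀ r ∈ S, ∃ g ∈ A, r = (9/10 : ℝ) * g := by
    rintro r ⟨x, y, hne, hiso, rfl⟩
    have hu0 : x + y ≠ 0 := by
      intro h
      have hv : ‖x - y‖ = 0 := by rw [← hiso, h, norm_zero]
      have hxy : x = y := sub_eq_zero.mp (norm_eq_zero.mp hv)
      subst hxy
      have h2 : (2:ℝ) • x = 0 := by rw [two_smul]; exact h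
      have hx0 : x = 0 := by
        rcases smul_eq_zero.mp h2 with h' | h'
        · norm_num at h'
        · exact h'
      exact hne (by rw [hx0])
    have hs : ‖x + y‖ ≠ 0 := norm_ne_zero_iff.mpr hu0
    set a : X := ‖x + y‖⁻¹ • (x + y) with hadef
    set b : X := ‖x + y‖⁻¹ • (x - y) with hbdef
    have ha : ‖a‖ = 1 := by
      rw [hadef, norm_smul, norm_inv, norm_norm, inv_mul_cancel₀ hs]
    have hb : ‖b‖ = 1 := by
      rw [hbdef, norm_smul, norm_inv, norm_norm, ← hiso, inv_mul_cancel₀ hs]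
    have hsa : ‖x + y‖ • a = x + y := by
      rw [hadef, smul_smul, mul_inv_cancel₀ hs, one_smul]
    have hsb : ‖x + y‖ • b = x - y := by
      rw [hbdef, smul_smul, mul_inv_cancel₀ hs, one_smul]
    have e1 : x + (2:ℝ) • y = ((3/2 : ℝ) * ‖x + y‖) • (a - (1/3:ℝ) • b) := by
      have h1 : ((3/2 : ℝ) * ‖x + y‖) • (a - (1/3:ℝ) • b)
          = (3/2:ℝ) • ((‖x + y‖ • a) - (1/3:ℝ) • (‖x + y‖ • b)) := by module
      rw [h1, hsa, hsb]; module
    have e2 : (2:ℝ) • x + y = ((3/2 : ℝ) * ‖x + y‖) • (a + (1/3:ℝ) • b) := by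
      have h1 : ((3/2 : ℝ) * ‖x + y‖) • (a + (1/3:ℝ) • b)
          = (3/2:ℝ) • ((‖x + y‖ • a) + (1/3:ℝ) • (‖x + y‖ • b)) := by module
      rw [h1, hsa, hsb]; module
    refine ⟨(‖a + (1/3:ℝ) • b‖ ^ 2 + ‖a - (1/3:ℝ) • b‖ ^ 2) / 2,
      ⟨a, b, ha, hb, rfl⟩, ?_⟩
    rw [e1, e2, norm_smul, norm_smul]
    have hns : ‖(3/2 : ℝ) * ‖x + y‖‖ = 3/2 * ‖x + y‖ := by
      rw [Real.norm_eq_abs, abs_of_nonneg]; positivity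
    rw [hns]
    have hs2 : ‖x + y‖ ^ 2 ≠ 0 := pow_ne_zero _ hs
    field_simp
    ring
  have hSne : S.Nonempty := by
    obtain ⟨g, hg⟩ := hAne
    exact ⟨_, hmap g hg⟩
  have hlub : IsLUB S ((9/10 : ℝ) * sSup A) := by
    constructor
    · rintro r hr
      obtain ⟨g, hg, rfl⟩ := hrev r hr
      have := le_csSup hbdd hg
      nlinarith
    · intro c hc
      have h10 : sSup A ≤ (10/9 : ℝ) * c := by
        apply csSup_le hAne
        intro g hg
        have := hc (hmap g hg)
        linarith
      linarith
  have h1 : OmegaPrime X = sSup S := rfl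
  have h2 : gammaConst X (1/3) = sSup A := rfl
  rw [h1, h2, hlub.csSup_eq hSne]
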